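/- arXiv:1612.03514 — 3 statements merged into one kernel-verified Lean document; each statement's English description precedes it below -/
import Mathlib

section
/- Let $1 < k \le l < \Delta < n$ and let $G$ be a connected graph of order $n$ with maximum degree $\Delta$ that contains no copy of the book $B_{k+1}$ and no copy of the complete bipartite graph $K_{2,l+1}$ as a subgraph. Then the signless Laplacian spectral radius satisfies $q(G) \le \frac{1}{4}\left[3\Delta + k - 2l + 1 + \sqrt{(3\Delta + k - 2l + 1)^2 + 16 l(\Delta + n - 1)}\right]$, and equality holds if and only if $G$ is a strongly regular graph with parameters $(\Delta, k, l)$, i.e., $G$ is $\Delta$-regular, every pair of adjacent vertices has exactly $k$ common neighbors, and every pair of distinct non-adjacent vertices has exactly $l$ common neighbors. -/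
open SimpleGraph Finset

/-- The book graph `B m = K₂ + complement K_m`: `m` triangles sharing a common edge. -/
def bookGraph (m : ℕ) : SimpleGraph (Fin 2 ⊕ Fin m) where
  Adj x y := x ≠ y ∧ (x.isLeft ∨ y.isLeft)
  symm := ⟨fun x y h => ⟨h.1.symm, h.2.symm⟩⟩
  loopless := ⟨fun x h => h.1 rfl⟩

/-- `G` contains a copy of `H` as a subgraph, i.e. there is an injective graph
homomorphism from `H` to `G`. -/
def ContainsCopy {α β : Type*} (H : SimpleGraph α) (G : SimpleGraph β) : Prop :=
  ∃ f : H →g G, Function.Injective f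

/-- The signless Laplacian spectral radius `q(G)`: the largest eigenvalue of
`Q(G) = D(G) + A(G)`. -/
noncomputable def signlessLapSpectralRadius {n : ℕ} (G : SimpleGraph (Fin n))
    [DecidableRel G.Adj] : ℝ :=
  sSup (spectrum ℝ (G.degMatrix ℝ + G.adjMatrix ℝ))

namespace SLSAux

open Matrix

/-! ### Spectral toolkit -/

variable {N : ℕ}

lemma mem_spectrum_iff_eigen {M : Matrix (Fin N) (Fin N) ℝ} {μ : ℝ} :
    μ ∈ spectrum ℝ M ↔ ∃ x : Fin N → ℝ, x ≠ 0 ∧ M.mulVec x = μ • x := by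
  rw [← AlgEquiv.spectrum_eq (Matrix.toLinAlgEquiv' (R := ℝ) (n := Fin N)),
    ← Module.End.hasEigenvalue_iff_mem_spectrum]
  constructor
  · intro h
    obtain ⟨x, hx⟩ := h.exists_hasEigenvector
    refine ⟨x, hx.right, ?_⟩
    have := hx.apply_eq_smul
    simpa [Matrix.toLinAlgEquiv'_apply, Matrix.toLin'_apply] using this
  · rintro ⟨x, hx0, hx⟩
    refine Module.End.hasEigenvalue_of_hasEigenvector (x := x) ⟨?_, hx0⟩
    rw [Module.End.mem_eigenspace_iff]
    simpa [Matrix.toLinAlgEquiv'_apply, Matrix.toLin'_apply] using hx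

lemma herm_spectrum_eq {M : Matrix (Fin N) (Fin N) ℝ} (hM : M.IsHermitian) :
    spectrum ℝ M = Set.range hM.eigenvalues := by
  have hU := hM.spectral_theorem
  set U : Matrix (Fin N) (Fin N) ℝ := ↑hM.eigenvectorUnitary with hUdef
  have h1 : U * star U = 1 := Matrix.mem_unitaryGroup_iff.mp hM.eigenvectorUnitary.2
  have h2 : star U * U = 1 := Matrix.mem_unitaryGroup_iff'.mp hM.eigenvectorUnitary.2
  let u : (Matrix (Fin N) (Fin N) ℝ)ˣ := ⟨U, star U, h1, h2⟩
  have key := spectrum.units_conjugate (R := ℝ)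
    (a := Matrix.diagonal (RCLike.ofReal ∘ hM.eigenvalues)) (u := u)
  have hM' : (u : Matrix (Fin N) (Fin N) ℝ) * Matrix.diagonal (RCLike.ofReal ∘ hM.eigenvalues)
      * ((u⁻¹ : (Matrix (Fin N) (Fin N) ℝ)ˣ) : Matrix (Fin N) (Fin N) ℝ) = M := hU.symm
  rw [hM', spectrum_diagonal] at key
  rw [key]; ext μ; simp [Function.comp]

lemma herm_spectrum_finite {M : Matrix (Fin N) (Fin N) ℝ} (hM : M.IsHermitian) :
    (spectrum ℝ M).Finite := by
  rw [herm_spectrum_eq hM]; exact Set.finite_range _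

lemma herm_spectrum_nonempty (hN : 0 < N) {M : Matrix (Fin N) (Fin N) ℝ}
    (hM : M.IsHermitian) : (spectrum ℝ M).Nonempty := by
  rw [herm_spectrum_eq hM]
  exact ⟨_, ⟨(⟨0, hN⟩ : Fin N), rfl⟩⟩

lemma sSup_spectrum_mem (hN : 0 < N) {M : Matrix (Fin N) (Fin N) ℝ} (hM : M.IsHermitian) :
    sSup (spectrum ℝ M) ∈ spectrum ℝ M :=
  Set.Nonempty.csSup_mem (herm_spectrum_nonempty hN hM) (herm_spectrum_finite hM)

lemma le_sSup_spectrum {M : Matrix (Fin N) (Fin N) ℝ} (hM : M.IsHermitian) {μ : ℝ}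
    (hμ : μ ∈ spectrum ℝ M) : μ ≤ sSup (spectrum ℝ M) :=
  le_csSup (Set.Finite.bddAbove (herm_spectrum_finite hM)) hμ

lemma top_sub_posSemidef (hN : 0 < N) {M : Matrix (Fin N) (Fin N) ℝ} (hM : M.IsHermitian) :
    ((sSup (spectrum ℝ M)) • (1 : Matrix (Fin N) (Fin N) ℝ) - M).PosSemidef := by
  set q := sSup (spectrum ℝ M)
  have hherm : ((q : ℝ) • (1 : Matrix (Fin N) (Fin N) ℝ) - M).IsHermitian := by
    rw [Matrix.IsHermitian, Matrix.conjTranspose_sub, Matrix.conjTranspose_smul,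
      Matrix.conjTranspose_one, hM.eq, star_trivial]
  refine hherm.posSemidef_iff_eigenvalues_nonneg.mpr fun i => show (0:ℝ) ≤ hherm.eigenvalues i from ?_
  have hmem := hherm.eigenvalues_mem_spectrum_real i
  rw [mem_spectrum_iff_eigen] at hmem
  obtain ⟨x, hx0, hx⟩ := hmem
  have hx' : M.mulVec x = (q - hherm.eigenvalues i) • x := by
    have := hx
    rw [Matrix.sub_mulVec, Matrix.smul_mulVec, Matrix.one_mulVec] at this
    funext j
    have := congrFun this j
    simp only [Pi.sub_apply, Pi.smul_apply, smul_eq_mul] at this ⊢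
    linarith
  have : (q - hherm.eigenvalues i) ∈ spectrum ℝ M := mem_spectrum_iff_eigen.mpr ⟨x, hx0, hx'⟩
  have := le_sSup_spectrum hM this
  linarith

lemma posSemidef_dot_zero {M : Matrix (Fin N) (Fin N) ℝ} (h : M.PosSemidef)
    {x : Fin N → ℝ} (hx : x ⬝ᵥ M.mulVec x = 0) : M.mulVec x = 0 := by
  exact (Matrix.PosSemidef.dotProduct_mulVec_zero_iff h x).mp (by simpa using hx)

lemma abs_dot_le {M : Matrix (Fin N) (Fin N) ℝ} (hnn : ∀ i j, 0 ≤ M i j) (y : Fin N → ℝ) :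
    y ⬝ᵥ M.mulVec y ≤ (fun i => |y i|) ⬝ᵥ M.mulVec (fun i => |y i|) := by
  simp only [dotProduct, Matrix.mulVec, Finset.mul_sum]
  refine Finset.sum_le_sum fun i _ => Finset.sum_le_sum fun j _ => ?_
  have h1 : y i * (M i j * y j) = M i j * (y i * y j) := by ring
  have h2 : |y i| * (M i j * |y j|) = M i j * (|y i| * |y j|) := by ring
  rw [h1, h2]
  refine mul_le_mul_of_nonneg_left ?_ (hnn i j)
  calc y i * y j ≤ |y i * y j| := le_abs_self _
    _ = |y i| * |y j| := abs_mul _ _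

lemma exists_nonneg_top_eigenvector (hN : 0 < N) {M : Matrix (Fin N) (Fin N) ℝ}
    (hM : M.IsHermitian) (hnn : ∀ i j, 0 ≤ M i j) :
    ∃ x : Fin N → ℝ, x ≠ 0 ∧ (∀ i, 0 ≤ x i) ∧
      M.mulVec x = sSup (spectrum ℝ M) • x := by
  set q := sSup (spectrum ℝ M) with hq
  obtain ⟨y, hy0, hy⟩ := mem_spectrum_iff_eigen.mp (sSup_spectrum_mem hN hM)
  set x : Fin N → ℝ := fun i => |y i| with hxdef
  have hxnn : ∀ i, 0 ≤ x i := fun i => abs_nonneg _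
  have hx0 : x ≠ 0 := by
    intro h
    apply hy0
    funext i
    have := congrFun h i
    simpa [hxdef, abs_eq_zero] using this
  have hxx : x ⬝ᵥ x = y ⬝ᵥ y := by
    simp only [dotProduct, hxdef, abs_mul_abs_self]
  have hyMy : y ⬝ᵥ M.mulVec y = q * (y ⬝ᵥ y) := by
    rw [hy, dotProduct_smul, smul_eq_mul]
  have hPSD := top_sub_posSemidef hN hM
  have hdot : x ⬝ᵥ ((q • (1:Matrix (Fin N) (Fin N) ℝ) - M).mulVec x)
      = q * (x ⬝ᵥ x) - x ⬝ᵥ M.mulVec x := by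
    rw [Matrix.sub_mulVec, dotProduct_sub, Matrix.smul_mulVec, Matrix.one_mulVec,
      dotProduct_smul, smul_eq_mul]
  have hle : x ⬝ᵥ ((q • (1:Matrix (Fin N) (Fin N) ℝ) - M).mulVec x) ≤ 0 := by
    rw [hdot, hxx]
    have := abs_dot_le hnn y
    rw [hyMy] at this
    simpa [hxdef] using (by linarith : q * (y ⬝ᵥ y) - x ⬝ᵥ M.mulVec x ≤ 0)
  have hge : 0 ≤ x ⬝ᵥ ((q • (1:Matrix (Fin N) (Fin N) ℝ) - M).mulVec x) := by
    have := hPSD.dotProduct_mulVec_nonneg x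
    simpa using this
  have hzero := posSemidef_dot_zero hPSD (le_antisymm hle hge)
  refine ⟨x, hx0, hxnn, ?_⟩
  have := hzero
  rw [Matrix.sub_mulVec, Matrix.smul_mulVec, Matrix.one_mulVec, sub_eq_zero] at this
  exact this.symm

/-! ### Real algebra toolkit -/

variable {B C q : ℝ}

lemma alg_le (hC : 0 ≤ C) (hf : q^2 - (B/2)*q - C ≤ 0) :
    q ≤ (1/4) * (B + Real.sqrt (B^2 + 16*C)) := by
  have hBC : 0 ≤ B^2 + 16*C := by positivity
  set s := Real.sqrt (B^2 + 16*C) with hs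
  have hs2 : s^2 = B^2 + 16*C := Real.sq_sqrt hBC
  have hs0 : 0 ≤ s := Real.sqrt_nonneg _
  have h1 : (q - B/4)^2 ≤ (s/4)^2 := by nlinarith
  have h2 : q - B/4 ≤ s/4 := by
    calc q - B/4 ≤ |q - B/4| := le_abs_self _
      _ = Real.sqrt ((q - B/4)^2) := (Real.sqrt_sq_eq_abs _).symm
      _ ≤ Real.sqrt ((s/4)^2) := Real.sqrt_le_sqrt h1
      _ = |s/4| := Real.sqrt_sq_eq_abs _
      _ = s/4 := abs_of_nonneg (by positivity)
  linarith

lemma alg_root (hC : 0 ≤ C) :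
    ((1/4) * (B + Real.sqrt (B^2 + 16*C)))^2
      - (B/2) * ((1/4) * (B + Real.sqrt (B^2 + 16*C))) - C = 0 := by
  have hBC : 0 ≤ B^2 + 16*C := by positivity
  have hs2 : (Real.sqrt (B^2 + 16*C))^2 = B^2 + 16*C := Real.sq_sqrt hBC
  nlinarith [hs2]

lemma alg_unique (hC : 0 ≤ C) (hq : B/4 ≤ q) (hf : q^2 - (B/2)*q - C = 0) :
    q = (1/4) * (B + Real.sqrt (B^2 + 16*C)) := by
  have hBC : 0 ≤ B^2 + 16*C := by positivity
  set s := Real.sqrt (B^2 + 16*C) with hs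
  have hs2 : s^2 = B^2 + 16*C := Real.sq_sqrt hBC
  have hs0 : 0 ≤ s := Real.sqrt_nonneg _
  have h1 : (q - B/4)^2 = (s/4)^2 := by nlinarith
  have h2 : q - B/4 = s/4 := by
    calc q - B/4 = |q - B/4| := (abs_of_nonneg (by linarith)).symm
      _ = Real.sqrt ((q - B/4)^2) := (Real.sqrt_sq_eq_abs _).symm
      _ = Real.sqrt ((s/4)^2) := by rw [h1]
      _ = |s/4| := Real.sqrt_sq_eq_abs _
      _ = s/4 := abs_of_nonneg (by positivity)
  linarith

lemma core_ineq {q d S D K L nn : ℝ}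
    (hq : q = d + S) (hS0 : 0 ≤ S) (hSd : S ≤ d) (hdD : d ≤ D)
    (hL0 : 0 < L) (hDL : 0 < D + 2*L - 1)
    (hC1 : q*S ≤ D*S + d + K*S + L*(nn-1-d))
    (hC2 : q*S ≤ D*S + d + K*d + L*(nn-1-d)) :
    q^2 - ((3*D+K-2*L+1)/2)*q - L*(D+nn-1) ≤ 0 ∧
      (q < 2*D → q^2 - ((3*D+K-2*L+1)/2)*q - L*(D+nn-1) < 0) := by
  subst hq
  rcases le_or_gt (D + L - 1) (d + S) with hcase | hcase
  · constructor
    · nlinarith [mul_nonneg (sub_nonneg.mpr hdD) (by linarith : 0 ≤ d + S - D + 1 - L),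
        mul_nonneg (by linarith : (0:ℝ) ≤ D + 2*L - 1) (by linarith : 0 ≤ 2*D - (d + S))]
    · intro hlt
      nlinarith [mul_nonneg (sub_nonneg.mpr hdD) (by linarith : 0 ≤ d + S - D + 1 - L),
        mul_pos (by linarith : (0:ℝ) < D + 2*L - 1) (by linarith : 0 < 2*D - (d + S))]
  · constructor
    · nlinarith [mul_nonneg (by linarith : 0 ≤ 2*d - (d + S))
          (by linarith : 0 ≤ D + L - 1 - (d + S)),
        mul_nonneg (by linarith : (0:ℝ) ≤ 2*D - (d + S)) (by linarith : 0 ≤ d + S + L)]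
    · intro hlt
      nlinarith [mul_nonneg (by linarith : 0 ≤ 2*d - (d + S))
          (by linarith : 0 ≤ D + L - 1 - (d + S)),
        mul_pos (by linarith : (0:ℝ) < 2*D - (d + S)) (by linarith : 0 < d + S + L)]

/-! ### Graph toolkit -/

variable {n : ℕ} {G : SimpleGraph (Fin n)} [DecidableRel G.Adj]

lemma card_common_eq (u v : Fin n) :
    Fintype.card (G.commonNeighbors u v) =
      (G.neighborFinset u ∩ G.neighborFinset v).card := by
  rw [← Set.toFinset_card]
  congr 1
  ext w
  simp [mem_commonNeighbors, adj_comm]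

lemma sum_swap_neighbors (u : Fin n) (x : Fin n → ℝ) :
    ∑ v ∈ G.neighborFinset u, ∑ w ∈ G.neighborFinset v, x w
      = ∑ w : Fin n, ((G.neighborFinset u ∩ G.neighborFinset w).card : ℝ) * x w := by
  have step1 : ∀ v : Fin n, ∑ w ∈ G.neighborFinset v, x w
      = ∑ w : Fin n, if G.Adj v w then x w else 0 := by
    intro v
    rw [neighborFinset_eq_filter, Finset.sum_filter]
  calc ∑ v ∈ G.neighborFinset u, ∑ w ∈ G.neighborFinset v, x w
      = ∑ v ∈ G.neighborFinset u, ∑ w : Fin n, if G.Adj v w then x w else 0 :=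
        Finset.sum_congr rfl fun v _ => step1 v
    _ = ∑ w : Fin n, ∑ v ∈ G.neighborFinset u, if G.Adj v w then x w else 0 :=
        Finset.sum_comm
    _ = ∑ w : Fin n, ((G.neighborFinset u ∩ G.neighborFinset w).card : ℝ) * x w := by
        refine Finset.sum_congr rfl fun w _ => ?_
        rw [Finset.sum_ite, Finset.sum_const, Finset.sum_const_zero, add_zero, nsmul_eq_mul]
        have : (G.neighborFinset u).filter (fun v => G.Adj v w)
            = G.neighborFinset u ∩ G.neighborFinset w := by
          ext v; simp [mem_neighborFinset, adj_comm]
        rw [this]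

lemma exists_inj_of_card_le {s : Finset (Fin n)} {m : ℕ} (h : m ≤ s.card) :
    ∃ g : Fin m → Fin n, Function.Injective g ∧ ∀ i, g i ∈ s := by
  obtain ⟨t, hts, htc⟩ := Finset.exists_subset_card_eq h
  let e := t.equivFinOfCardEq htc
  refine ⟨fun i => (e.symm i : Fin n), fun a b hab => ?_, fun i => hts (e.symm i).2⟩
  have : e.symm a = e.symm b := Subtype.ext hab
  simpa using congrArg e this

lemma book_bound {k : ℕ} (hbook : ¬ ContainsCopy (bookGraph (k + 1)) G) {u w : Fin n}
    (huw : G.Adj u w) : (G.neighborFinset u ∩ G.neighborFinset w).card ≤ k := by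
  by_contra hc
  push_neg at hc
  obtain ⟨g, hginj, hgmem⟩ := exists_inj_of_card_le (Nat.succ_le_of_lt hc)
  have hgu : ∀ i, G.Adj u (g i) := fun i => by
    have := hgmem i; rw [Finset.mem_inter, mem_neighborFinset, mem_neighborFinset] at this
    exact this.1
  have hgw : ∀ i, G.Adj w (g i) := fun i => by
    have := hgmem i; rw [Finset.mem_inter, mem_neighborFinset, mem_neighborFinset] at this
    exact this.2
  set p : Fin 2 → Fin n := ![u, w] with hp
  have hphom : ∀ (i j : Fin 2), i ≠ j → G.Adj (p i) (p j) := by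
    intro i j hij
    fin_cases i <;> fin_cases j <;> simp_all [hp]
    · exact huw.symm
  apply hbook
  refine ⟨⟨Sum.elim p g, ?_⟩, ?_⟩
  · rintro a b ⟨hab, hleft⟩
    match a, b with
    | Sum.inl i, Sum.inl j => exact hphom i j (by simpa using hab)
    | Sum.inl i, Sum.inr j =>
      have : G.Adj (p i) (g j) := by
        fin_cases i
        · exact hgu j
        · exact hgw j
      simpa using this
    | Sum.inr i, Sum.inl j =>
      have : G.Adj (g i) (p j) := by
        fin_cases j
        · exact (hgu i).symm
        · exact (hgw i).symm
      simpa using this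
    | Sum.inr i, Sum.inr j => simp [Sum.isLeft] at hleft
  · have hpne : ∀ (i : Fin 2) (j : Fin (k+1)), p i ≠ g j := by
      intro i j
      fin_cases i
      · exact fun h => (G.ne_of_adj (hgu j)) (by simpa [hp] using h)
      · exact fun h => (G.ne_of_adj (hgw j)) (by simpa [hp] using h)
    intro a b hab
    match a, b with
    | Sum.inl i, Sum.inl j =>
      have : p i = p j := hab
      have hij : i = j := by
        fin_cases i <;> fin_cases j <;> simp_all [hp]
      exact congrArg Sum.inl hij
    | Sum.inl i, Sum.inr j => exact absurd hab (hpne i j)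
    | Sum.inr i, Sum.inl j => exact absurd hab.symm (hpne j i)
    | Sum.inr i, Sum.inr j => exact congrArg Sum.inr (hginj hab)

lemma bip_bound {l : ℕ}
    (hbip : ¬ ContainsCopy (completeBipartiteGraph (Fin 2) (Fin (l + 1))) G)
    {u w : Fin n} (huw : u ≠ w) :
    (G.neighborFinset u ∩ G.neighborFinset w).card ≤ l := by
  by_contra hc
  push_neg at hc
  obtain ⟨g, hginj, hgmem⟩ := exists_inj_of_card_le (Nat.succ_le_of_lt hc)
  have hgu : ∀ i, G.Adj u (g i) := fun i => by
    have := hgmem i; rw [Finset.mem_inter, mem_neighborFinset, mem_neighborFinset] at this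
    exact this.1
  have hgw : ∀ i, G.Adj w (g i) := fun i => by
    have := hgmem i; rw [Finset.mem_inter, mem_neighborFinset, mem_neighborFinset] at this
    exact this.2
  set p : Fin 2 → Fin n := ![u, w] with hp
  apply hbip
  refine ⟨⟨Sum.elim p g, ?_⟩, ?_⟩
  · rintro a b hab
    match a, b with
    | Sum.inl i, Sum.inl j => simp [completeBipartiteGraph] at hab
    | Sum.inr i, Sum.inr j => simp [completeBipartiteGraph] at hab
    | Sum.inl i, Sum.inr j =>
      have : G.Adj (p i) (g j) := by
        fin_cases i
        · exact hgu j
        · exact hgw j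
      simpa using this
    | Sum.inr i, Sum.inl j =>
      have : G.Adj (g i) (p j) := by
        fin_cases j
        · exact (hgu i).symm
        · exact (hgw i).symm
      simpa using this
  · have hpne : ∀ (i : Fin 2) (j : Fin (l+1)), p i ≠ g j := by
      intro i j
      fin_cases i
      · exact fun h => (G.ne_of_adj (hgu j)) (by simpa [hp] using h)
      · exact fun h => (G.ne_of_adj (hgw j)) (by simpa [hp] using h)
    intro a b hab
    match a, b with
    | Sum.inl i, Sum.inl j =>
      have : p i = p j := hab
      have hij : i = j := by
        fin_cases i <;> fin_cases j <;> simp_all [hp]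
      exact congrArg Sum.inl hij
    | Sum.inl i, Sum.inr j => exact absurd hab (hpne i j)
    | Sum.inr i, Sum.inl j => exact absurd hab.symm (hpne j i)
    | Sum.inr i, Sum.inr j => exact congrArg Sum.inr (hginj hab)

lemma walk_prop {P : Fin n → Prop} (hstep : ∀ v w, G.Adj v w → P v → P w) :
    ∀ {a b : Fin n}, G.Walk a b → P a → P b := by
  intro a b p
  induction p with
  | nil => exact id
  | cons h q ih => exact fun ha => ih (hstep _ _ h ha)

end SLSAux

open SLSAux Matrix

set_option maxHeartbeats 2000000 in
theorem stmt_0 (n k l Δ : ℕ) (hk : 1 < k) (hkl : k ≤ l) (hlΔ : l < Δ) (hΔn : Δ < n)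
    (G : SimpleGraph (Fin n)) [DecidableRel G.Adj]
    (hconn : G.Connected) (hmax : G.maxDegree = Δ)
    (hbook : ¬ ContainsCopy (bookGraph (k + 1)) G)
    (hbip : ¬ ContainsCopy (completeBipartiteGraph (Fin 2) (Fin (l + 1))) G) :
    signlessLapSpectralRadius G ≤
      (1 / 4 : ℝ) * ((3 * Δ + k - 2 * l + 1) +
        Real.sqrt ((3 * Δ + k - 2 * l + 1) ^ 2 + 16 * l * (Δ + n - 1))) ∧
    (signlessLapSpectralRadius G =
      (1 / 4 : ℝ) * ((3 * Δ + k - 2 * l + 1) +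
        Real.sqrt ((3 * Δ + k - 2 * l + 1) ^ 2 + 16 * l * (Δ + n - 1))) ↔
      (G.IsRegularOfDegree Δ ∧
        (∀ u v, G.Adj u v → Fintype.card (G.commonNeighbors u v) = k) ∧
        (∀ u v, u ≠ v → ¬ G.Adj u v → Fintype.card (G.commonNeighbors u v) = l))) := by
  classical
  have hn0 : 0 < n := by omega
  haveI : Nonempty (Fin n) := ⟨⟨0, hn0⟩⟩
  -- cast facts
  have hkR : (2:ℝ) ≤ (k:ℕ) := by exact_mod_cast hk
  have hklR : (k:ℝ) ≤ l := by exact_mod_cast hkl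
  have hlΔR : (l:ℝ) + 1 ≤ Δ := by exact_mod_cast hlΔ
  have hΔnR : (Δ:ℝ) + 1 ≤ n := by exact_mod_cast hΔn
  set Q : Matrix (Fin n) (Fin n) ℝ := G.degMatrix ℝ + G.adjMatrix ℝ with hQdef
  have hQherm : Q.IsHermitian := by
    rw [Matrix.IsHermitian]
    ext i j
    simp only [hQdef, Matrix.conjTranspose_apply, Matrix.add_apply, star_trivial,
      SimpleGraph.degMatrix, SimpleGraph.adjMatrix_apply, Matrix.diagonal_apply]
    by_cases h : i = j
    · subst h; rfl
    · have hadj : G.Adj j i ↔ G.Adj i j := G.adj_comm j i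
      simp [h, Ne.symm h, hadj]
  have hQnn : ∀ i j, 0 ≤ Q i j := by
    intro i j
    simp only [hQdef, Matrix.add_apply, SimpleGraph.degMatrix, SimpleGraph.adjMatrix_apply,
      Matrix.diagonal_apply]
    split_ifs <;> positivity
  set q : ℝ := signlessLapSpectralRadius G with hqdef
  have hqQ : q = sSup (spectrum ℝ Q) := rfl
  -- degrees
  have hdegle : ∀ v, (G.degree v : ℝ) ≤ Δ := by
    intro v
    have := G.degree_le_maxDegree v
    rw [hmax] at this
    exact_mod_cast this
  -- eigen equation, generic
  have heig_gen : ∀ (z : Fin n → ℝ) (μ : ℝ), Q.mulVec z = μ • z →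
      ∀ v, (G.degree v : ℝ) * z v + ∑ w ∈ G.neighborFinset v, z w = μ * z v := by
    intro z μ hz v
    have := congrFun hz v
    simpa [hQdef, Matrix.add_mulVec, SimpleGraph.degMatrix_mulVec_apply,
      SimpleGraph.adjMatrix_mulVec_apply] using this
  -- common-neighbor counts
  set t : Fin n → Fin n → ℕ :=
    fun a b => ((G.neighborFinset a ∩ G.neighborFinset b).card) with htdef
  set Rc : Fin n → Finset (Fin n) :=
    fun a => Finset.univ \ insert a (G.neighborFinset a) with hRcdef
  have hu_notA : ∀ a : Fin n, a ∉ G.neighborFinset a :=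
    fun a => SimpleGraph.notMem_neighborFinset_self G a
  have hsplitA : ∀ (a : Fin n) (f : Fin n → ℝ), ∑ w : Fin n, f w
      = (f a + ∑ w ∈ G.neighborFinset a, f w) + ∑ w ∈ Rc a, f w := by
    intro a f
    have hsub : insert a (G.neighborFinset a) ⊆ Finset.univ := Finset.subset_univ _
    rw [hRcdef, ← Finset.sum_sdiff hsub, Finset.sum_insert (hu_notA a)]
    ring
  have hRcardA : ∀ a : Fin n, ((Rc a).card : ℝ) = n - 1 - (G.degree a : ℝ) := by
    intro a
    have hc : (insert a (G.neighborFinset a)).card = G.degree a + 1 := by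
      rw [Finset.card_insert_of_notMem (hu_notA a), SimpleGraph.card_neighborFinset_eq_degree]
    have hle : (insert a (G.neighborFinset a)).card ≤ n := by
      simpa using Finset.card_le_univ (insert a (G.neighborFinset a))
    rw [hRcdef]
    simp only []
    rw [Finset.card_sdiff_of_subset (Finset.subset_univ _), Finset.card_univ, Fintype.card_fin, hc]
    rw [hc] at hle
    push_cast [Nat.cast_sub hle]
    ring
  have htaa : ∀ a : Fin n, (t a a : ℝ) = (G.degree a : ℝ) := by
    intro a
    rw [htdef]
    simp [SimpleGraph.card_neighborFinset_eq_degree]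
  have hTkA : ∀ a : Fin n, ∀ w ∈ G.neighborFinset a, (t a w : ℝ) ≤ k := by
    intro a w hw
    exact_mod_cast book_bound hbook ((SimpleGraph.mem_neighborFinset _ _ _).mp hw)
  have hTlA : ∀ a w : Fin n, w ≠ a → (t a w : ℝ) ≤ l := by
    intro a w hw
    exact_mod_cast bip_bound hbip (Ne.symm hw)
  have hRneA : ∀ a : Fin n, ∀ w ∈ Rc a, w ≠ a ∧ w ∉ G.neighborFinset a := by
    intro a w hw
    rw [hRcdef, Finset.mem_sdiff, Finset.mem_insert] at hw
    push_neg at hw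
    exact hw.2
  have hswapA : ∀ (a : Fin n) (f : Fin n → ℝ),
      ∑ v ∈ G.neighborFinset a, ∑ w ∈ G.neighborFinset v, f w
        = ∑ w : Fin n, (t a w : ℝ) * f w := by
    intro a f
    exact sum_swap_neighbors a f
  -- top eigenvector, nonnegative, normalized
  obtain ⟨x, hx0, hxnn, hxeig⟩ := exists_nonneg_top_eigenvector hn0 hQherm hQnn
  rw [← hqQ] at hxeig
  obtain ⟨u, -, humax⟩ := Finset.exists_max_image Finset.univ x Finset.univ_nonempty
  have hxu_pos : 0 < x u := by
    obtain ⟨i, hi⟩ := Function.ne_iff.mp hx0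
    have : 0 < x i := lt_of_le_of_ne (hxnn i) (by simpa [eq_comm] using hi)
    exact lt_of_lt_of_le this (humax i (Finset.mem_univ i))
  set y : Fin n → ℝ := fun w => (x u)⁻¹ * x w with hydef
  have hyu : y u = 1 := inv_mul_cancel₀ (ne_of_gt hxu_pos)
  have hy0 : ∀ w, 0 ≤ y w := fun w =>
    mul_nonneg (inv_nonneg.mpr hxu_pos.le) (hxnn w)
  have hy1 : ∀ w, y w ≤ 1 := by
    intro w
    rw [← hyu]
    exact mul_le_mul_of_nonneg_left (humax w (Finset.mem_univ w)) (inv_nonneg.mpr hxu_pos.le)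
  have hyeig : Q.mulVec y = q • y := by
    have hy' : y = (x u)⁻¹ • x := rfl
    rw [hy', Matrix.mulVec_smul, hxeig, smul_comm]
  have heig := heig_gen y q hyeig
  -- first-order quantities at the maximizing vertex
  set dR : ℝ := (G.degree u : ℝ) with hdRdef
  set SR : ℝ := ∑ w ∈ G.neighborFinset u, y w with hSRdef
  have h_e1 : q = dR + SR := by
    have := heig u
    rw [hyu, mul_one, mul_one] at this
    linarith
  have hS0 : 0 ≤ SR := Finset.sum_nonneg fun w _ => hy0 w
  have hSd : SR ≤ dR := by
    have := Finset.sum_le_card_nsmul (G.neighborFinset u) y 1 (fun w _ => hy1 w)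
    rw [SimpleGraph.card_neighborFinset_eq_degree] at this
    simpa [hSRdef, nsmul_eq_mul, hdRdef] using this
  have hdD : dR ≤ Δ := hdegle u
  -- second-order equation
  have hq2 : q * SR = (∑ v ∈ G.neighborFinset u, (G.degree v : ℝ) * y v)
      + ∑ v ∈ G.neighborFinset u, ∑ w ∈ G.neighborFinset v, y w := by
    rw [hSRdef, Finset.mul_sum, ← Finset.sum_add_distrib]
    exact Finset.sum_congr rfl fun v _ => (heig v).symm
  have hA : ∑ v ∈ G.neighborFinset u, (G.degree v : ℝ) * y v ≤ (Δ:ℝ) * SR := by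
    rw [hSRdef, Finset.mul_sum]
    exact Finset.sum_le_sum fun v _ => mul_le_mul_of_nonneg_right (hdegle v) (hy0 v)
  have hB1 : ∑ w ∈ G.neighborFinset u, (t u w : ℝ) * y w ≤ (k:ℝ) * SR := by
    rw [hSRdef, Finset.mul_sum]
    exact Finset.sum_le_sum fun w hw => mul_le_mul_of_nonneg_right (hTkA u w hw) (hy0 w)
  have hB2 : ∑ w ∈ Rc u, (t u w : ℝ) * y w ≤ (l:ℝ) * ((n:ℝ) - 1 - dR) := by
    calc ∑ w ∈ Rc u, (t u w : ℝ) * y w ≤ ∑ _w ∈ Rc u, (l:ℝ) := by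
          refine Finset.sum_le_sum fun w hw => ?_
          calc (t u w : ℝ) * y w ≤ (l:ℝ) * 1 :=
                mul_le_mul (hTlA u w (hRneA u w hw).1) (hy1 w) (hy0 w) (by positivity)
            _ = l := mul_one _
      _ = ((Rc u).card : ℝ) * l := by rw [Finset.sum_const, nsmul_eq_mul]
      _ = (l:ℝ) * ((n:ℝ) - 1 - dR) := by rw [hRcardA u, hdRdef]; ring
  have hBtot : ∑ v ∈ G.neighborFinset u, ∑ w ∈ G.neighborFinset v, y w
      ≤ dR + (k:ℝ) * SR + (l:ℝ) * ((n:ℝ) - 1 - dR) := by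
    rw [hswapA u y, hsplitA u (fun w => (t u w : ℝ) * y w)]
    have h1 : (t u u : ℝ) * y u = dR := by rw [htaa u, hyu, mul_one, hdRdef]
    rw [h1]
    linarith [hB1, hB2]
  have hC1 : q * SR ≤ (Δ:ℝ)*SR + dR + (k:ℝ)*SR + (l:ℝ)*((n:ℝ)-1-dR) := by
    rw [hq2]; linarith [hA, hBtot]
  have hC2 : q * SR ≤ (Δ:ℝ)*SR + dR + (k:ℝ)*dR + (l:ℝ)*((n:ℝ)-1-dR) := by
    have hkk : (k:ℝ) * SR ≤ (k:ℝ) * dR :=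
      mul_le_mul_of_nonneg_left hSd (by positivity)
    rw [hq2]; linarith [hA, hBtot]
  have hlpos : (0:ℝ) < (l:ℝ) := by linarith
  have hcore := core_ineq h_e1 hS0 hSd hdD hlpos
    (by linarith : (0:ℝ) < (Δ:ℝ) + 2*(l:ℝ) - 1) hC1 hC2
  -- identify B, C
  set Bc : ℝ := 3*(Δ:ℝ) + (k:ℝ) - 2*(l:ℝ) + 1 with hBcdef
  set Cc : ℝ := (l:ℝ) * ((Δ:ℝ) + (n:ℝ) - 1) with hCcdef
  have hCc0 : 0 ≤ Cc := by
    rw [hCcdef]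
    have h1 : (1:ℝ) ≤ n := by exact_mod_cast hn0
    nlinarith
  have hgoal_eq : (1 / 4 : ℝ) * ((3 * Δ + k - 2 * l + 1) +
      Real.sqrt ((3 * Δ + k - 2 * l + 1) ^ 2 + 16 * l * (Δ + n - 1)))
      = (1/4) * (Bc + Real.sqrt (Bc^2 + 16*Cc)) := by
    rw [hBcdef, hCcdef]
    norm_num [mul_assoc]
  have hfcore : q^2 - (Bc/2)*q - Cc ≤ 0 := by
    have := hcore.1
    rw [hBcdef, hCcdef]
    nlinarith [this]
  have hq2D_le : q ≤ 2*(Δ:ℝ) := by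
    have := h_e1; nlinarith [hSd, hdD]
  constructor
  · rw [hgoal_eq]
    exact alg_le hCc0 hfcore
  · constructor
    · -- equality → strongly regular
      intro hqeq
      rw [hgoal_eq] at hqeq
      have hfq0 : q^2 - (Bc/2)*q - Cc = 0 := by
        rw [hqeq]
        exact alg_root hCc0
      have hq2D : q = 2*(Δ:ℝ) := by
        rcases lt_or_eq_of_le hq2D_le with hlt | he
        · exfalso
          have hstrict := hcore.2 hlt
          have : q^2 - (Bc/2)*q - Cc < 0 := by
            rw [hBcdef, hCcdef]
            nlinarith [hstrict]
          linarith
        · exact he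
      -- all entries of y are 1 and the graph is regular
      have hstep : ∀ v, y v = 1 → (G.degree v = Δ ∧ ∀ w ∈ G.neighborFinset v, y w = 1) := by
        intro v hv
        have he := heig v
        rw [hv, mul_one, mul_one, hq2D] at he
        have hSv_le : ∑ w ∈ G.neighborFinset v, y w ≤ (G.degree v : ℝ) := by
          have := Finset.sum_le_card_nsmul (G.neighborFinset v) y 1 (fun w _ => hy1 w)
          rw [SimpleGraph.card_neighborFinset_eq_degree] at this
          simpa [nsmul_eq_mul] using this
        have hdvle : (G.degree v : ℝ) ≤ Δ := hdegle v
        have hdeg : (G.degree v : ℝ) = Δ := by linarith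
        have hSv : ∑ w ∈ G.neighborFinset v, y w = (G.degree v : ℝ) := by linarith
        constructor
        · exact_mod_cast hdeg
        · intro w hw
          by_contra hne
          have hwlt : y w < 1 := lt_of_le_of_ne (hy1 w) hne
          have hlt2 : ∑ w ∈ G.neighborFinset v, y w < ∑ _w ∈ G.neighborFinset v, (1:ℝ) :=
            Finset.sum_lt_sum (fun i _ => hy1 i) ⟨w, hw, hwlt⟩
          rw [Finset.sum_const, nsmul_eq_mul, mul_one,
            SimpleGraph.card_neighborFinset_eq_degree] at hlt2
          linarith [hSv]
      have hally : ∀ v, y v = 1 := by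
        intro v
        obtain ⟨p⟩ := hconn u v
        exact walk_prop (fun a b hab ha => (hstep a ha).2 b
          ((SimpleGraph.mem_neighborFinset _ _ _).mpr hab)) p hyu
      have hreg : G.IsRegularOfDegree Δ := fun v => (hstep v (hally v)).1
      -- counting identity forced by equality
      have hid : (Δ:ℝ)*(Δ:ℝ) = (Δ:ℝ) + ((k:ℝ)*(Δ:ℝ) + (l:ℝ)*((n:ℝ)-1-(Δ:ℝ))) := by
        have h0 : ((2*(Δ:ℝ))^2 - (Bc/2)*(2*(Δ:ℝ)) - Cc) = 0 := by rw [← hq2D]; exact hfq0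
        rw [hBcdef, hCcdef] at h0
        nlinarith [h0]
      -- per-vertex exactness of common neighbour counts
      have hcnt : ∀ a : Fin n, (∀ w ∈ G.neighborFinset a, (t a w : ℝ) = k)
          ∧ (∀ w ∈ Rc a, (t a w : ℝ) = l) := by
        intro a
        have hsw : ∑ w : Fin n, (t a w : ℝ) * 1 = (Δ:ℝ)*(Δ:ℝ) := by
          rw [← hswapA a (fun _ => (1:ℝ))]
          have : ∀ v ∈ G.neighborFinset a, (∑ _w ∈ G.neighborFinset v, (1:ℝ)) = (Δ:ℝ) := by
            intro v _
            rw [Finset.sum_const, nsmul_eq_mul, mul_one,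
              SimpleGraph.card_neighborFinset_eq_degree, hreg v]
          rw [Finset.sum_congr rfl this, Finset.sum_const, nsmul_eq_mul,
            SimpleGraph.card_neighborFinset_eq_degree, hreg a]
        have hsw' : ∑ w : Fin n, (t a w : ℝ) = (Δ:ℝ)*(Δ:ℝ) := by
          rw [← hsw]; exact Finset.sum_congr rfl fun w _ => (mul_one _).symm
        have hsplit2 := hsplitA a (fun w => (t a w : ℝ))
        have htaaΔ : (t a a : ℝ) = (Δ:ℝ) := by rw [htaa a, hreg a]
        have hRcardΔ : ((Rc a).card : ℝ) = (n:ℝ) - 1 - (Δ:ℝ) := by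
          rw [hRcardA a, hreg a]
        -- the two partial sums and their bounds
        have hS1le : ∑ w ∈ G.neighborFinset a, (t a w : ℝ)
            ≤ ∑ _w ∈ G.neighborFinset a, (k:ℝ) :=
          Finset.sum_le_sum fun w hw => hTkA a w hw
        have hS2le : ∑ w ∈ Rc a, (t a w : ℝ) ≤ ∑ _w ∈ Rc a, (l:ℝ) :=
          Finset.sum_le_sum fun w hw => hTlA a w (hRneA a w hw).1
        have hS1c : ∑ _w ∈ G.neighborFinset a, (k:ℝ) = (k:ℝ)*(Δ:ℝ) := by
          rw [Finset.sum_const, nsmul_eq_mul, SimpleGraph.card_neighborFinset_eq_degree, hreg a]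
          ring
        have hS2c : ∑ _w ∈ Rc a, (l:ℝ) = (l:ℝ)*((n:ℝ)-1-(Δ:ℝ)) := by
          rw [Finset.sum_const, nsmul_eq_mul, hRcardΔ]
          ring
        have hS1eq : ∑ w ∈ G.neighborFinset a, (t a w : ℝ)
            = ∑ _w ∈ G.neighborFinset a, (k:ℝ) := by
          rw [hS1c]
          rw [hsw', htaaΔ] at hsplit2
          rw [hS1c] at hS1le
          rw [hS2c] at hS2le
          linarith [hsplit2, hid]
        have hS2eq : ∑ w ∈ Rc a, (t a w : ℝ) = ∑ _w ∈ Rc a, (l:ℝ) := by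
          rw [hS2c]
          rw [hsw', htaaΔ] at hsplit2
          rw [hS1c] at hS1le
          rw [hS2c] at hS2le
          linarith [hsplit2, hid]
        constructor
        · exact fun w hw =>
            (Finset.sum_eq_sum_iff_of_le fun i hi => hTkA a i hi).mp hS1eq w hw
        · exact fun w hw =>
            (Finset.sum_eq_sum_iff_of_le fun i hi => hTlA a i (hRneA a i hi).1).mp hS2eq w hw
      refine ⟨hreg, ?_, ?_⟩
      · intro a v hav
        have hv : v ∈ G.neighborFinset a := (SimpleGraph.mem_neighborFinset _ _ _).mpr hav
        have := (hcnt a).1 v hv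
        have ht : t a v = k := by exact_mod_cast this
        rw [card_common_eq a v]
        exact ht
      · intro a v hne hnadj
        have hv : v ∈ Rc a := by
          rw [hRcdef, Finset.mem_sdiff, Finset.mem_insert]
          exact ⟨Finset.mem_univ v, by
            push_neg
            exact ⟨Ne.symm hne, fun hc => hnadj ((SimpleGraph.mem_neighborFinset _ _ _).mp hc)⟩⟩
        have := (hcnt a).2 v hv
        have ht : t a v = l := by exact_mod_cast this
        rw [card_common_eq a v]
        exact ht
    · -- strongly regular → equality
      rintro ⟨hreg, hadjk, hnadjl⟩
      have hone_ne : (fun _ : Fin n => (1:ℝ)) ≠ 0 := by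
        intro h
        have := congrFun h ⟨0, hn0⟩
        norm_num at this
      have hone : Q.mulVec (fun _ => (1:ℝ)) = (2*(Δ:ℝ)) • (fun _ : Fin n => (1:ℝ)) := by
        funext v
        have := heig_gen (fun _ => (1:ℝ)) (2*(Δ:ℝ))
        simp only [hQdef, Matrix.add_mulVec, Pi.add_apply,
          SimpleGraph.degMatrix_mulVec_apply, SimpleGraph.adjMatrix_mulVec_apply,
          Pi.smul_apply, smul_eq_mul, mul_one]
        rw [Finset.sum_const, nsmul_eq_mul, mul_one,
          SimpleGraph.card_neighborFinset_eq_degree, hreg v]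
        ring
      have hmem2 : (2*(Δ:ℝ)) ∈ spectrum ℝ Q :=
        mem_spectrum_iff_eigen.mpr ⟨_, hone_ne, hone⟩
      have hub : ∀ μ ∈ spectrum ℝ Q, μ ≤ 2*(Δ:ℝ) := by
        intro μ hμ
        obtain ⟨z, hz0, hz⟩ := mem_spectrum_iff_eigen.mp hμ
        obtain ⟨v, -, hvmax⟩ :=
          Finset.exists_max_image Finset.univ (fun i => |z i|) Finset.univ_nonempty
        have hzv : 0 < |z v| := by
          obtain ⟨i, hi⟩ := Function.ne_iff.mp hz0
          exact lt_of_lt_of_le (abs_pos.mpr hi) (hvmax i (Finset.mem_univ i))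
        have he := heig_gen z μ hz v
        have h1 : (μ - (G.degree v : ℝ)) * z v = ∑ w ∈ G.neighborFinset v, z w := by
          have : ∑ w ∈ G.neighborFinset v, z w = μ * z v - (G.degree v : ℝ) * z v := by
            linarith [he]
          rw [this]; ring
        have habs : |μ - (G.degree v : ℝ)| * |z v| ≤ (G.degree v : ℝ) * |z v| := by
          calc |μ - (G.degree v : ℝ)| * |z v| = |(μ - (G.degree v : ℝ)) * z v| :=
                (abs_mul _ _).symm
            _ = |∑ w ∈ G.neighborFinset v, z w| := by rw [h1]
            _ ≤ ∑ w ∈ G.neighborFinset v, |z w| := Finset.abs_sum_le_sum_abs _ _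
            _ ≤ (G.neighborFinset v).card • |z v| :=
                Finset.sum_le_card_nsmul _ _ _ (fun w _ => hvmax w (Finset.mem_univ w))
            _ = (G.degree v : ℝ) * |z v| := by
                rw [SimpleGraph.card_neighborFinset_eq_degree, nsmul_eq_mul]
        have h2 : |μ - (G.degree v : ℝ)| ≤ (G.degree v : ℝ) :=
          le_of_mul_le_mul_right (by simpa [mul_comm] using habs) hzv
        have h3 := (abs_le.mp h2).2
        have h4 : (G.degree v : ℝ) = Δ := by exact_mod_cast congrArg (Nat.cast : ℕ → ℝ) (hreg v)
        linarith
      have hq2D : q = 2*(Δ:ℝ) := by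
        rw [hqQ]
        exact le_antisymm (csSup_le ⟨_, hmem2⟩ hub)
          (le_csSup (Set.Finite.bddAbove (herm_spectrum_finite hQherm)) hmem2)
      -- counting identity from SRG parameters
      have htk : ∀ a w : Fin n, G.Adj a w → t a w = k := by
        intro a w h
        have := hadjk a w h
        rw [card_common_eq a w] at this
        exact this
      have htl : ∀ a w : Fin n, w ≠ a → ¬ G.Adj a w → t a w = l := by
        intro a w hne hnadj
        have := hnadjl a w (Ne.symm hne) hnadj
        rw [card_common_eq a w] at this
        exact this
      have hid : (Δ:ℝ)*(Δ:ℝ) = (Δ:ℝ) + ((k:ℝ)*(Δ:ℝ) + (l:ℝ)*((n:ℝ)-1-(Δ:ℝ))) := by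
        set a : Fin n := ⟨0, hn0⟩
        have hsw : ∑ w : Fin n, (t a w : ℝ) * 1 = (Δ:ℝ)*(Δ:ℝ) := by
          rw [← hswapA a (fun _ => (1:ℝ))]
          have : ∀ v ∈ G.neighborFinset a, (∑ _w ∈ G.neighborFinset v, (1:ℝ)) = (Δ:ℝ) := by
            intro v _
            rw [Finset.sum_const, nsmul_eq_mul, mul_one,
              SimpleGraph.card_neighborFinset_eq_degree, hreg v]
          rw [Finset.sum_congr rfl this, Finset.sum_const, nsmul_eq_mul,
            SimpleGraph.card_neighborFinset_eq_degree, hreg a]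
        have hsw' : ∑ w : Fin n, (t a w : ℝ) = (Δ:ℝ)*(Δ:ℝ) := by
          rw [← hsw]; exact Finset.sum_congr rfl fun w _ => (mul_one _).symm
        have hsplit2 := hsplitA a (fun w => (t a w : ℝ))
        have htaaΔ : (t a a : ℝ) = (Δ:ℝ) := by rw [htaa a, hreg a]
        have hS1 : ∑ w ∈ G.neighborFinset a, (t a w : ℝ) = (k:ℝ)*(Δ:ℝ) := by
          have : ∀ w ∈ G.neighborFinset a, (t a w : ℝ) = (k:ℝ) := by
            intro w hw
            exact_mod_cast congrArg (Nat.cast : ℕ → ℝ)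
              (htk a w ((SimpleGraph.mem_neighborFinset _ _ _).mp hw))
          rw [Finset.sum_congr rfl this, Finset.sum_const, nsmul_eq_mul,
            SimpleGraph.card_neighborFinset_eq_degree, hreg a]
          ring
        have hS2 : ∑ w ∈ Rc a, (t a w : ℝ) = (l:ℝ)*((n:ℝ)-1-(Δ:ℝ)) := by
          have hv : ∀ w ∈ Rc a, (t a w : ℝ) = (l:ℝ) := by
            intro w hw
            obtain ⟨hne, hnin⟩ := hRneA a w hw
            exact_mod_cast congrArg (Nat.cast : ℕ → ℝ)
              (htl a w hne (fun hc => hnin ((SimpleGraph.mem_neighborFinset _ _ _).mpr hc)))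
          rw [Finset.sum_congr rfl hv, Finset.sum_const, nsmul_eq_mul, hRcardA a, hreg a]
          ring
        rw [hsw', htaaΔ, hS1, hS2] at hsplit2
        linarith [hsplit2]
      have hfq0 : q^2 - (Bc/2)*q - Cc = 0 := by
        rw [hq2D, hBcdef, hCcdef]
        nlinarith [hid]
      have hB4 : Bc/4 ≤ q := by
        rw [hq2D, hBcdef]
        linarith
      rw [hgoal_eq]
      exact alg_unique hCc0 hB4 hfq0
end

section
/- Let $G$ be a graph of order $n$ with maximum degree $\Delta$ on vertices $v_1, \dots, v_n$, and let $\mathbf{x} = (x_1, \dots, x_n)^T$ be a nonnegative unit eigenvector of the signless Laplacian matrix $Q(G)$ corresponding to its largest eigenvalue $q(G)$. Then $q(G) \le \Delta + n - 1 - 2 \sum x_i x_j$, where the sum ranges over all unordered pairs $\{v_i, v_j\}$ of distinct non-adjacent vertices of $G$. -/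
open SimpleGraph Finset

/-!
Write `q = xᵀQx = xᵀDx + xᵀA(G)x` and split the adjacency matrix of the complete graph as
`A(K_n) = A(G) + A(Gᶜ)`. Then `xᵀDx ≤ Δ`, `xᵀA(K_n)x = (∑ xᵢ)² - 1 ≤ n - 1` by Cauchy–Schwarz,
and `xᵀA(Gᶜ)x` is twice the sum of `xᵢxⱼ` over the non-adjacent pairs `i < j`.
-/

open Matrix

namespace SimpleGraph

variable {V R : Type*} [Fintype V]

theorem dotProduct_mulVec_degMatrix_le [CommRing R] [LinearOrder R] [IsStrictOrderedRing R]
    (G : SimpleGraph V) [DecidableRel G.Adj] [DecidableEq V] (x : V → R) :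
    x ⬝ᵥ (G.degMatrix R *ᵥ x) ≤ G.maxDegree * (x ⬝ᵥ x) := by
  rw [dotProduct_mulVec_degMatrix, dotProduct, mul_sum]
  refine sum_le_sum fun i _ => ?_
  rw [mul_assoc]
  exact mul_le_mul_of_nonneg_right (mod_cast G.degree_le_maxDegree i) (mul_self_nonneg _)

theorem dotProduct_mulVec_adjMatrix_top [CommRing R] [DecidableEq V] (x : V → R) :
    x ⬝ᵥ ((⊤ : SimpleGraph V).adjMatrix R *ᵥ x) = (∑ i, x i) ^ 2 - x ⬝ᵥ x := by
  have hoff (i j : V) : (if i ≠ j then x i * x j else 0) =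
      x i * x j - if i = j then x i * x j else 0 := by
    by_cases h : i = j <;> simp [h]
  rw [dotProduct_mulVec_adjMatrix]
  simp only [top_adj, hoff, sum_sub_distrib, sum_ite_eq, mem_univ, if_true, sq, sum_mul_sum,
    dotProduct]

theorem dotProduct_mulVec_adjMatrix_eq_two_mul_sum_lt [CommSemiring R] [LinearOrder V]
    (G : SimpleGraph V) [DecidableRel G.Adj] (x : V → R) :
    x ⬝ᵥ (G.adjMatrix R *ᵥ x) =
      2 * ∑ p ∈ univ.filter (fun p : V × V => p.1 < p.2 ∧ G.Adj p.1 p.2), x p.1 * x p.2 := by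
  have hsplit (i j : V) : (if G.Adj i j then x i * x j else 0) =
      (if i < j ∧ G.Adj i j then x i * x j else 0) +
        (if j < i ∧ G.Adj j i then x j * x i else 0) := by
    rcases lt_trichotomy i j with h | rfl | h
    · simp [h, h.not_gt]
    · simp
    · simp [h, h.not_gt, G.adj_comm, mul_comm]
  rw [dotProduct_mulVec_adjMatrix, sum_filter, Fintype.sum_prod_type]
  simp only [hsplit, sum_add_distrib]
  rw [sum_comm (f := fun i j => if j < i ∧ G.Adj j i then x j * x i else 0), two_mul]

end SimpleGraph

theorem stmt_6_general (n Δ : ℕ) (G : SimpleGraph (Fin n)) [DecidableRel G.Adj]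
    (hmax : G.maxDegree = Δ)
    (x : Fin n → ℝ) (hunit : ∑ i, (x i) ^ 2 = 1)
    (heig : (G.degMatrix ℝ + G.adjMatrix ℝ).mulVec x = signlessLapSpectralRadius G • x) :
    signlessLapSpectralRadius G ≤ (Δ : ℝ) + n - 1 -
      2 * ∑ p ∈ Finset.univ.filter
        (fun p : Fin n × Fin n => p.1 < p.2 ∧ ¬ G.Adj p.1 p.2), x p.1 * x p.2 := by
  have hxx : x ⬝ᵥ x = 1 := by simpa [dotProduct, sq] using hunit
  have hq : signlessLapSpectralRadius G =
      x ⬝ᵥ (G.degMatrix ℝ *ᵥ x) + x ⬝ᵥ (G.adjMatrix ℝ *ᵥ x) := by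
    rw [← dotProduct_add, ← Matrix.add_mulVec, heig, dotProduct_smul, hxx, smul_eq_mul, mul_one]
  have hcompl : x ⬝ᵥ (G.adjMatrix ℝ *ᵥ x) + x ⬝ᵥ (Gᶜ.adjMatrix ℝ *ᵥ x) =
      x ⬝ᵥ ((⊤ : SimpleGraph (Fin n)).adjMatrix ℝ *ᵥ x) := by
    rw [← dotProduct_add, ← Matrix.add_mulVec,
      isCompl_compl.adjMatrix_add_adjMatrix_eq_adjMatrix_completeGraph ℝ]
  have hnonadj : x ⬝ᵥ (Gᶜ.adjMatrix ℝ *ᵥ x) = 2 * ∑ p ∈ Finset.univ.filter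
      (fun p : Fin n × Fin n => p.1 < p.2 ∧ ¬ G.Adj p.1 p.2), x p.1 * x p.2 := by
    rw [dotProduct_mulVec_adjMatrix_eq_two_mul_sum_lt]
    congr 2
    refine filter_congr fun p _ => ?_
    simp +contextual [compl_adj, ne_of_lt]
  have hdeg := G.dotProduct_mulVec_degMatrix_le x
  have hcs : (∑ i, x i) ^ 2 ≤ n := by
    simpa [hunit] using sq_sum_le_card_mul_sum_sq (s := univ) (f := x)
  rw [hxx, hmax] at hdeg
  rw [dotProduct_mulVec_adjMatrix_top, hxx] at hcompl
  linarith

theorem stmt_6 (n Δ : ℕ) (G : SimpleGraph (Fin n)) [DecidableRel G.Adj]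
    (hmax : G.maxDegree = Δ)
    (x : Fin n → ℝ) (hnn : ∀ i, 0 ≤ x i) (hunit : ∑ i, (x i) ^ 2 = 1)
    (heig : (G.degMatrix ℝ + G.adjMatrix ℝ).mulVec x = signlessLapSpectralRadius G • x) :
    signlessLapSpectralRadius G ≤ (Δ : ℝ) + n - 1 -
      2 * ∑ p ∈ Finset.univ.filter
        (fun p : Fin n × Fin n => p.1 < p.2 ∧ ¬ G.Adj p.1 p.2), x p.1 * x p.2 :=
  stmt_6_general n Δ G hmax x hunit heig
end

section
/- Let $1 < k \le l < \Delta < n$ and let $G$ be a connected graph of order $n$ with maximum degree $\Delta$ that contains no copy of the book $B_{k+1}$ and no copy of the complete bipartite graph $K_{2,l+1}$ as a subgraph. Then the signless Laplacian spectral radius $q = q(G)$ satisfies the quadratic inequality $q^2 \le \frac{1}{2}(3\Delta + k - 2l + 1)\, q + l(\Delta + n - 1)$. -/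
open SimpleGraph Finset

open Matrix


lemma exists_inj_into {α : Type*} {S : Finset α} {m : ℕ} (h : m ≤ S.card) :
    ∃ g : Fin m → α, Function.Injective g ∧ ∀ i, g i ∈ S := by
  obtain ⟨T, hTS, hT⟩ := Finset.exists_subset_card_eq h
  let e := Finset.equivFinOfCardEq hT
  refine ⟨fun i => (e.symm i : α), fun i j hij => ?_, fun i => hTS (e.symm i).2⟩
  exact e.symm.injective (Subtype.ext hij)

section twolemmas
variable {n k l : ℕ} {G : SimpleGraph (Fin n)} [DecidableRel G.Adj] {a b : Fin n}

lemma aux_inj {m : ℕ} (hab : a ≠ b) {g : Fin m → Fin n} (hginj : Function.Injective g)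
    (hga : ∀ i, G.Adj a (g i)) (hgb : ∀ i, G.Adj b (g i)) :
    Function.Injective (Sum.elim (fun j : Fin 2 => if j = 0 then a else b) g) := by
  intro x y hxy
  rcases x with i | i <;> rcases y with j | j
  · fin_cases i <;> fin_cases j <;> simp_all
  · exfalso
    fin_cases i <;> simp at hxy
    · exact (G.ne_of_adj (hga j)) hxy
    · exact (G.ne_of_adj (hgb j)) hxy
  · exfalso
    fin_cases j <;> simp at hxy
    · exact (G.ne_of_adj (hga i)) hxy.symm
    · exact (G.ne_of_adj (hgb i)) hxy.symm
  · exact congrArg Sum.inr (hginj (by simpa using hxy))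

lemma book_bound (hbook : ¬ ContainsCopy (bookGraph (k + 1)) G) (hab : G.Adj a b) :
    (G.neighborFinset a ∩ G.neighborFinset b).card ≤ k := by
  by_contra hcon
  push_neg at hcon
  obtain ⟨g, hginj, hgmem⟩ := exists_inj_into (Nat.succ_le_of_lt hcon)
  have hga : ∀ i, G.Adj a (g i) := fun i =>
    (mem_neighborFinset _ _ _).mp (mem_inter.mp (hgmem i)).1
  have hgb : ∀ i, G.Adj b (g i) := fun i =>
    (mem_neighborFinset _ _ _).mp (mem_inter.mp (hgmem i)).2
  set f := Sum.elim (fun j : Fin 2 => if j = 0 then a else b) g with hf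
  have hhom : ∀ x y, (bookGraph (k+1)).Adj x y → G.Adj (f x) (f y) := by
    rintro x y (⟨hne, hl⟩ : x ≠ y ∧ (x.isLeft ∨ y.isLeft))
    rcases x with i | i <;> rcases y with j | j
    · fin_cases i <;> fin_cases j <;> simp_all [hf] <;> first | exact hab | exact hab.symm
    · fin_cases i <;> simp [hf] <;> first | exact hga j | exact hgb j
    · fin_cases j <;> simp [hf] <;> first | exact (hga i).symm | exact (hgb i).symm
    · simp at hl
  exact hbook ⟨⟨f, fun {x y} h => hhom x y h⟩, aux_inj (G.ne_of_adj hab) hginj hga hgb⟩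

lemma k2l_bound (hbip : ¬ ContainsCopy (completeBipartiteGraph (Fin 2) (Fin (l + 1))) G)
    (hab : a ≠ b) :
    (G.neighborFinset a ∩ G.neighborFinset b).card ≤ l := by
  by_contra hcon
  push_neg at hcon
  obtain ⟨g, hginj, hgmem⟩ := exists_inj_into (Nat.succ_le_of_lt hcon)
  have hga : ∀ i, G.Adj a (g i) := fun i =>
    (mem_neighborFinset _ _ _).mp (mem_inter.mp (hgmem i)).1
  have hgb : ∀ i, G.Adj b (g i) := fun i =>
    (mem_neighborFinset _ _ _).mp (mem_inter.mp (hgmem i)).2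
  set f := Sum.elim (fun j : Fin 2 => if j = 0 then a else b) g with hf
  have hhom : ∀ x y, (completeBipartiteGraph (Fin 2) (Fin (l+1))).Adj x y → G.Adj (f x) (f y) := by
    rintro x y hxy
    rcases x with i | i <;> rcases y with j | j <;> simp_all [hf]
    · fin_cases i <;> simp <;> first | exact hga j | exact hgb j
    · fin_cases j <;> simp <;> first | exact (hga i).symm | exact (hgb i).symm
  exact hbip ⟨⟨f, fun {x y} h => hhom x y h⟩, aux_inj hab hginj hga hgb⟩

end twolemmas


lemma perron_exists {n : ℕ} (hn : 0 < n) (A : Matrix (Fin n) (Fin n) ℝ)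
    (hA : A.IsHermitian) (hpos : ∀ i j, 0 ≤ A i j) :
    ∃ x : Fin n → ℝ, (∀ i, 0 ≤ x i) ∧ x ≠ 0 ∧
      A *ᵥ x = (sSup (spectrum ℝ A)) • x := by
  have : NeZero n := ⟨hn.ne'⟩
  set q := sSup (spectrum ℝ A) with hq
  have hspec : spectrum ℝ A = Set.range hA.eigenvalues := hA.spectrum_real_eq_range_eigenvalues
  have hfin : (Set.range hA.eigenvalues).Finite := Set.finite_range _
  have hne : (Set.range hA.eigenvalues).Nonempty := Set.range_nonempty _
  have hqmem : q ∈ Set.range hA.eigenvalues := by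
    rw [hq, hspec]; exact hne.csSup_mem hfin
  obtain ⟨i₀, hi₀⟩ := hqmem
  have hle : ∀ i, hA.eigenvalues i ≤ q := fun i => by
    rw [hq, hspec]; exact le_csSup hfin.bddAbove (Set.mem_range_self i)
  set v : Fin n → ℝ := ⇑(hA.eigenvectorBasis i₀) with hvdef
  have hv : A *ᵥ v = q • v := by rw [hA.mulVec_eigenvectorBasis, hi₀]
  have hvne : v ≠ 0 := by
    intro h
    apply hA.eigenvectorBasis.orthonormal.ne_zero i₀
    ext i
    exact congrFun h i
  -- M = q • 1 - A is PSD
  set U : Matrix (Fin n) (Fin n) ℝ := (hA.eigenvectorUnitary : Matrix (Fin n) (Fin n) ℝ) with hUdef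
  have hU1 : U * Uᴴ = 1 := by
    rw [← Matrix.star_eq_conjTranspose]
    exact (Matrix.mem_unitaryGroup_iff).mp hA.eigenvectorUnitary.2
  have hdiag : q • (1 : Matrix (Fin n) (Fin n) ℝ) -
      Matrix.diagonal (RCLike.ofReal ∘ hA.eigenvalues) =
      Matrix.diagonal (fun i => q - hA.eigenvalues i) := by
    ext i j
    by_cases h : i = j <;>
      simp [h, Matrix.diagonal_apply, Matrix.one_apply, Matrix.smul_apply]
  have hMdec : q • (1 : Matrix (Fin n) (Fin n) ℝ) - A =
      U * Matrix.diagonal (fun i => q - hA.eigenvalues i) * Uᴴ := by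
    have hsp : A = U * Matrix.diagonal (RCLike.ofReal ∘ hA.eigenvalues) * star U :=
      hA.spectral_theorem
    rw [Matrix.star_eq_conjTranspose] at hsp
    calc q • (1 : Matrix (Fin n) (Fin n) ℝ) - A
        = q • (U * 1 * Uᴴ) - U * Matrix.diagonal (RCLike.ofReal ∘ hA.eigenvalues) * Uᴴ := by
          rw [Matrix.mul_one, hU1, ← hsp]
      _ = U * (q • (1 : Matrix (Fin n) (Fin n) ℝ)) * Uᴴ
            - U * Matrix.diagonal (RCLike.ofReal ∘ hA.eigenvalues) * Uᴴ := by
          rw [Matrix.mul_smul, Matrix.smul_mul]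
      _ = U * (q • (1 : Matrix (Fin n) (Fin n) ℝ) -
            Matrix.diagonal (RCLike.ofReal ∘ hA.eigenvalues)) * Uᴴ := by
          rw [Matrix.mul_sub, Matrix.sub_mul]
      _ = _ := by rw [hdiag]
  have hMpsd : (q • (1 : Matrix (Fin n) (Fin n) ℝ) - A).PosSemidef := by
    rw [hMdec]
    exact (Matrix.PosSemidef.diagonal (fun i => sub_nonneg.mpr (hle i))).mul_mul_conjTranspose_same U
  set w : Fin n → ℝ := fun i => |v i| with hwdef
  have hstarw : star w = w := by ext i; simp
  have hww : w ⬝ᵥ w = v ⬝ᵥ v := by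
    simp only [dotProduct, hwdef, abs_mul_abs_self]
  have hvAv : v ⬝ᵥ (A *ᵥ v) = q * (v ⬝ᵥ v) := by
    rw [hv, dotProduct_smul, smul_eq_mul]
  have hcompare : v ⬝ᵥ (A *ᵥ v) ≤ w ⬝ᵥ (A *ᵥ w) := by
    simp only [dotProduct, Matrix.mulVec, Finset.mul_sum]
    refine Finset.sum_le_sum fun i _ => Finset.sum_le_sum fun j _ => ?_
    have h1 : v i * (A i j * v j) ≤ |v i * (A i j * v j)| := le_abs_self _
    have h2 : |v i * (A i j * v j)| = w i * (A i j * w j) := by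
      rw [abs_mul, abs_mul, abs_of_nonneg (hpos i j)]
    calc v i * (A i j * v j) ≤ |v i * (A i j * v j)| := h1
      _ = w i * (A i j * w j) := h2
  have hzero : star w ⬝ᵥ ((q • (1 : Matrix (Fin n) (Fin n) ℝ) - A) *ᵥ w) = 0 := by
    have hMw : (q • (1 : Matrix (Fin n) (Fin n) ℝ) - A) *ᵥ w = q • w - A *ᵥ w := by
      rw [Matrix.sub_mulVec, Matrix.smul_mulVec, Matrix.one_mulVec]
    have hle0 : star w ⬝ᵥ ((q • (1 : Matrix (Fin n) (Fin n) ℝ) - A) *ᵥ w) ≤ 0 := by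
      rw [hstarw, hMw, dotProduct_sub, dotProduct_smul, smul_eq_mul, hww]
      have := hcompare
      rw [hvAv] at this
      linarith
    exact le_antisymm hle0 (hMpsd.dotProduct_mulVec_nonneg w)
  have hMw0 : (q • (1 : Matrix (Fin n) (Fin n) ℝ) - A) *ᵥ w = 0 :=
    (hMpsd.dotProduct_mulVec_zero_iff w).mp hzero
  have hAw : A *ᵥ w = q • w := by
    rw [Matrix.sub_mulVec, Matrix.smul_mulVec, Matrix.one_mulVec] at hMw0
    exact (sub_eq_zero.mp hMw0).symm
  refine ⟨w, fun i => abs_nonneg _, ?_, hAw⟩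
  intro h
  apply hvne
  ext i
  have := congrFun h i
  simp only [hwdef, Pi.zero_apply] at this ⊢
  exact abs_eq_zero.mp this

theorem stmt_7 (n k l Δ : ℕ) (hk : 1 < k) (hkl : k ≤ l) (hlΔ : l < Δ) (hΔn : Δ < n)
    (G : SimpleGraph (Fin n)) [DecidableRel G.Adj]
    (hconn : G.Connected) (hmax : G.maxDegree = Δ)
    (hbook : ¬ ContainsCopy (bookGraph (k + 1)) G)
    (hbip : ¬ ContainsCopy (completeBipartiteGraph (Fin 2) (Fin (l + 1))) G) :
    (signlessLapSpectralRadius G) ^ 2 ≤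
      (1 / 2 : ℝ) * (3 * Δ + k - 2 * l + 1) * signlessLapSpectralRadius G
        + l * (Δ + n - 1) := by
  classical
  have hn : 0 < n := lt_of_le_of_lt (Nat.zero_le Δ) hΔn
  set Q : Matrix (Fin n) (Fin n) ℝ := G.degMatrix ℝ + G.adjMatrix ℝ with hQdef
  have hQsym : Q.IsHermitian := by
    have h1 : (G.degMatrix ℝ).IsHermitian := by
      unfold SimpleGraph.degMatrix; exact Matrix.isHermitian_diagonal _
    have h2 : (G.adjMatrix ℝ).IsHermitian := by
      rw [Matrix.IsHermitian, conjTranspose_eq_transpose_of_trivial, transpose_adjMatrix]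
    exact h1.add h2
  have hQpos : ∀ i j, 0 ≤ Q i j := by
    intro i j
    rw [hQdef, Matrix.add_apply]
    refine add_nonneg ?_ ?_
    · unfold SimpleGraph.degMatrix
      rw [Matrix.diagonal_apply]
      split <;> positivity
    · rw [SimpleGraph.adjMatrix_apply]
      split <;> norm_num
  set q : ℝ := signlessLapSpectralRadius G with hqdef
  have hq' : q = sSup (spectrum ℝ Q) := by rw [hqdef, signlessLapSpectralRadius, hQdef]
  obtain ⟨w, hw0, hwne, hAw⟩ := perron_exists hn Q hQsym hQpos
  rw [← hq'] at hAw
  obtain ⟨u, -, hu⟩ := Finset.exists_max_image (univ : Finset (Fin n)) w ⟨⟨0, hn⟩, mem_univ _⟩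
  have hwu : 0 < w u := by
    rcases lt_or_ge 0 (w u) with h | h
    · exact h
    · exfalso; apply hwne; funext i
      exact le_antisymm (le_trans (hu i (mem_univ _)) h) (hw0 i)
  set x : Fin n → ℝ := (w u)⁻¹ • w with hxdef
  have hx_eigen : Q *ᵥ x = q • x := by
    rw [hxdef, Matrix.mulVec_smul, hAw, smul_comm]
  have hx0 : ∀ i, 0 ≤ x i := fun i => mul_nonneg (inv_nonneg.mpr hwu.le) (hw0 i)
  have hxu : x u = 1 := by
    simp only [hxdef, Pi.smul_apply, smul_eq_mul]
    exact inv_mul_cancel₀ hwu.ne'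
  have hx1 : ∀ i, x i ≤ 1 := by
    intro i
    simp only [hxdef, Pi.smul_apply, smul_eq_mul]
    calc (w u)⁻¹ * w i ≤ (w u)⁻¹ * w u :=
          mul_le_mul_of_nonneg_left (hu i (mem_univ _)) (inv_nonneg.mpr hwu.le)
      _ = 1 := inv_mul_cancel₀ hwu.ne'
  -- basic mulVec formula
  have hQv : ∀ (z : Fin n → ℝ) (i : Fin n), (Q *ᵥ z) i =
      (G.degree i : ℝ) * z i + ∑ j ∈ G.neighborFinset i, z j := by
    intro z i
    rw [hQdef, Matrix.add_mulVec, Pi.add_apply, SimpleGraph.degMatrix_mulVec_apply,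
      SimpleGraph.adjMatrix_mulVec_apply]
  have hQxi : ∀ i, (Q *ᵥ x) i = q * x i := by
    intro i
    rw [hx_eigen, Pi.smul_apply, smul_eq_mul]
  -- abbreviations
  set d : ℕ := G.degree u with hddef
  set N : Finset (Fin n) := G.neighborFinset u with hNdef
  have hNcard : N.card = d := by rw [hNdef, hddef]; rfl
  have huN : u ∉ N := by rw [hNdef]; simp
  have hdΔ : d ≤ Δ := hmax ▸ G.degree_le_maxDegree u
  set s : ℝ := ∑ v ∈ N, x v with hsdef
  have eq1 : q = d + s := by
    have h := hQxi u
    rw [hQv x u, hxu, mul_one, mul_one, ← hddef, ← hNdef, ← hsdef] at h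
    linarith
  have hs0 : 0 ≤ s := Finset.sum_nonneg fun v _ => hx0 v
  have hsd : s ≤ d := by
    calc s ≤ ∑ _v ∈ N, (1:ℝ) := Finset.sum_le_sum fun v _ => hx1 v
      _ = d := by rw [Finset.sum_const, hNcard, nsmul_eq_mul, mul_one]
  -- second-order equation
  have eq2 : q ^ 2 = d * q + ∑ v ∈ N, ((G.degree v : ℝ) * x v + ∑ j ∈ G.neighborFinset v, x j) := by
    have h := hQv (Q *ᵥ x) u
    rw [hQxi u, hxu, mul_one] at h
    have h2 : (Q *ᵥ (Q *ᵥ x)) u = q * q := by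
      rw [hx_eigen, Matrix.mulVec_smul, hx_eigen, Pi.smul_apply, Pi.smul_apply, smul_eq_mul,
        smul_eq_mul, hxu, mul_one]
    rw [h2] at h
    rw [pow_two, h, ← hddef, ← hNdef]
    congr 1
    refine Finset.sum_congr rfl fun v _ => hQv x v
  -- bound the degree sum
  have hS1 : ∑ v ∈ N, (G.degree v : ℝ) * x v ≤ Δ * s := by
    rw [hsdef, Finset.mul_sum]
    refine Finset.sum_le_sum fun v _ => ?_
    refine mul_le_mul_of_nonneg_right ?_ (hx0 v)
    exact_mod_cast hmax ▸ G.degree_le_maxDegree v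
  -- bound the double sum
  have hT : ∑ v ∈ N, ∑ j ∈ G.neighborFinset v, x j ≤
      d + k * d + l * ((n : ℝ) - 1 - d) := by
    have hstep : ∑ v ∈ N, ∑ j ∈ G.neighborFinset v, x j =
        ∑ j ∈ (univ : Finset (Fin n)), ((N ∩ G.neighborFinset j).card : ℝ) * x j := by
      calc ∑ v ∈ N, ∑ j ∈ G.neighborFinset v, x j
          = ∑ v ∈ N, ∑ j ∈ (univ : Finset (Fin n)), if G.Adj v j then x j else 0 := by
            refine Finset.sum_congr rfl fun v _ => ?_
            rw [SimpleGraph.neighborFinset_eq_filter, Finset.sum_filter]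
        _ = ∑ j ∈ (univ : Finset (Fin n)), ∑ v ∈ N, if G.Adj v j then x j else 0 :=
            Finset.sum_comm
        _ = ∑ j ∈ (univ : Finset (Fin n)), ((N ∩ G.neighborFinset j).card : ℝ) * x j := by
            refine Finset.sum_congr rfl fun j _ => ?_
            rw [← Finset.sum_filter, Finset.sum_const, nsmul_eq_mul]
            have hfe : N.filter (fun v => G.Adj v j) = N ∩ G.neighborFinset j := by
              ext z
              simp [SimpleGraph.mem_neighborFinset, G.adj_comm]
            rw [hfe]
    rw [hstep]
    have hsub : insert u N ⊆ (univ : Finset (Fin n)) := Finset.subset_univ _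
    rw [← Finset.sum_sdiff hsub, Finset.sum_insert huN]
    have hfu : ((N ∩ G.neighborFinset u).card : ℝ) * x u = d := by
      rw [← hNdef, Finset.inter_self, hNcard, hxu, mul_one]
    have hbN : ∑ j ∈ N, ((N ∩ G.neighborFinset j).card : ℝ) * x j ≤ k * d := by
      calc ∑ j ∈ N, ((N ∩ G.neighborFinset j).card : ℝ) * x j
          ≤ ∑ _j ∈ N, (k : ℝ) := by
            refine Finset.sum_le_sum fun j hj => ?_
            have hadj : G.Adj u j := by rw [hNdef] at hj; exact (mem_neighborFinset _ _ _).mp hj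
            have hcard : (N ∩ G.neighborFinset j).card ≤ k := by
              rw [hNdef]; exact book_bound hbook hadj
            calc ((N ∩ G.neighborFinset j).card : ℝ) * x j
                ≤ ((N ∩ G.neighborFinset j).card : ℝ) * 1 :=
                  mul_le_mul_of_nonneg_left (hx1 j) (Nat.cast_nonneg _)
              _ = ((N ∩ G.neighborFinset j).card : ℝ) := mul_one _
              _ ≤ (k : ℝ) := by exact_mod_cast hcard
        _ = k * d := by rw [Finset.sum_const, hNcard, nsmul_eq_mul, mul_comm]
    have hbR : ∑ j ∈ (univ : Finset (Fin n)) \ insert u N,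
        ((N ∩ G.neighborFinset j).card : ℝ) * x j ≤ l * ((n : ℝ) - 1 - d) := by
      have hcardR : ((univ : Finset (Fin n)) \ insert u N).card = n - (d + 1) := by
        rw [Finset.card_sdiff_of_subset hsub, Finset.card_insert_of_notMem huN, hNcard,
          Finset.card_univ, Fintype.card_fin]
      have hd1n : d + 1 ≤ n := Nat.succ_le_of_lt (lt_of_le_of_lt hdΔ hΔn)
      calc ∑ j ∈ (univ : Finset (Fin n)) \ insert u N, ((N ∩ G.neighborFinset j).card : ℝ) * x j
          ≤ ∑ _j ∈ (univ : Finset (Fin n)) \ insert u N, (l : ℝ) := by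
            refine Finset.sum_le_sum fun j hj => ?_
            have hju : j ≠ u := by
              intro h; subst h
              exact (Finset.mem_sdiff.mp hj).2 (Finset.mem_insert_self _ _)
            have hcard : (N ∩ G.neighborFinset j).card ≤ l := by
              rw [hNdef]; exact k2l_bound hbip (Ne.symm hju)
            calc ((N ∩ G.neighborFinset j).card : ℝ) * x j
                ≤ ((N ∩ G.neighborFinset j).card : ℝ) * 1 :=
                  mul_le_mul_of_nonneg_left (hx1 j) (Nat.cast_nonneg _)
              _ = ((N ∩ G.neighborFinset j).card : ℝ) := mul_one _
              _ ≤ (l : ℝ) := by exact_mod_cast hcard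
        _ = (n - (d+1) : ℕ) * (l:ℝ) := by rw [Finset.sum_const, hcardR, nsmul_eq_mul]
        _ = l * ((n : ℝ) - 1 - d) := by
            rw [Nat.cast_sub hd1n]
            push_cast
            ring
    linarith [hfu, hbN, hbR]
  -- final assembly
  have key : q ^ 2 ≤ d * q + Δ * s + (d + k * d + l * ((n:ℝ) - 1 - d)) := by
    rw [eq2]
    have := Finset.sum_add_distrib (s := N) (f := fun v => (G.degree v : ℝ) * x v)
      (g := fun v => ∑ j ∈ G.neighborFinset v, x j)
    rw [this]
    linarith [hS1, hT]
  have hqd : q ≤ 2 * d := by linarith [eq1, hsd]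
  have hdq : (d : ℝ) ≤ q := by linarith [eq1, hs0]
  have hd0 : (0:ℝ) ≤ d := Nat.cast_nonneg d
  have hdΔ' : (d : ℝ) ≤ Δ := by exact_mod_cast hdΔ
  have hklr : (k : ℝ) ≤ l := by exact_mod_cast hkl
  have hlΔr : (l : ℝ) + 1 ≤ Δ := by exact_mod_cast hlΔ
  have hl0 : (0:ℝ) ≤ l := Nat.cast_nonneg l
  have hseq : s = q - d := by linarith [eq1]
  rw [hseq] at key
  have t1 : ((Δ:ℝ) - d) * q ≥ 0 := mul_nonneg (by linarith) (by linarith)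
  have t2 : ((l:ℝ) + Δ - k - 1) * (d - q / 2) ≥ 0 :=
    mul_nonneg (by linarith) (by linarith)
  have t3 : (l:ℝ) * (2 * Δ - q) ≥ 0 := mul_nonneg hl0 (by linarith)
  nlinarith [key, t1, t2, t3]
end
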